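/- Let f: ℝ^d → ℝ be differentiable with L-Lipschitz gradient, and let x_0 ∈ ℝ^d and α > 0. Let u_0, …, u_{T−1} be i.i.d. standard Gaussian vectors on ℝ^d, and define the iterates x_{t+1} = x_t − η_t g(x_t) with η_t = 1/(4L‖u_t‖²), g(x_t) = ((f(x_t + α u_t) − f(x_t − α u_t))/(2α)) u_t, β_t = (f(x_t + α u_t) − f(x_t − α u_t))/(2α) − u_t^⊤ ∇f(x_t), and Δ_{α,t} = (η_t β_t²)/2 + L η_t² β_t² ‖u_t‖². For 0 < δ < 1 set τ_δ = log(2/δ), U_T(δ) = dT + 2√(dT τ_δ) + 2τ_δ, and A_{α,T}(δ) = (Lα²/16) U_T(δ). Then with probability at least 1 − δ/2, Σ_{t=0}^{T−1} Δ_{α,t} ≤ A_{α,T}(δ). -/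

import Mathlib

open MeasureTheory ProbabilityTheory Real Finset
open scoped RealInnerProductSpace

/-!
The finite-difference error is second order: for an `L`-smooth `f`, a Taylor bound gives
`|β_t| ≤ L α ‖u_t‖² / 2`, and with the normalized step `η_t = 1 / (4 L ‖u_t‖²)` this yields the
pathwise bound `Δ_{α,t} ≤ (L α² / 16) ‖u_t‖²`, whatever the trajectory. The event therefore
contains `Σ_t ‖u_t‖² ≤ U_T(δ)`, and the chi-square upper tail
`P(χ²_n ≥ n + 2√(nτ) + 2τ) ≤ e^{-τ}` (Laurent–Massart) follows from a Chernoff bound with the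
chi-square moment generating function `(1 - 2l)^{-n/2}`.
-/

section Smoothness

variable {E : Type*} [NormedAddCommGroup E] [InnerProductSpace ℝ E] [CompleteSpace E]
  {f : E → ℝ} {L : ℝ}

theorem hasDerivAt_comp_add_smul (hf : Differentiable ℝ f) (z v : E) (t : ℝ) :
    HasDerivAt (fun s : ℝ => f (z + s • v)) ⟪gradient f (z + t • v), v⟫ t := by
  have hline : HasDerivAt (fun s : ℝ => z + s • v) v t := by
    simpa using ((hasDerivAt_id t).smul_const v).const_add z
  exact (hf _).hasGradientAt.hasFDerivAt.comp_hasDerivAt t hline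

theorem abs_sub_sub_inner_gradient_le (hf : Differentiable ℝ f)
    (hlip : ∀ x y, ‖gradient f y - gradient f x‖ ≤ L * ‖y - x‖) (z v : E) :
    |f (z + v) - f z - ⟪v, gradient f z⟫| ≤ L / 2 * ‖v‖ ^ 2 := by
  set g : ℝ → ℝ := fun t => f (z + t • v) - f z - t * ⟪v, gradient f z⟫
  have hg : ∀ t, HasDerivAt g ⟪gradient f (z + t • v) - gradient f z, v⟫ t := fun t => by
    refine (((hasDerivAt_comp_add_smul hf z v t).sub_const (f z)).sub
        ((hasDerivAt_id t).mul_const ⟪v, gradient f z⟫)).congr_deriv ?_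
    rw [inner_sub_left, one_mul, real_inner_comm (gradient f z) v]
  have hB : ∀ t, HasDerivAt (fun t => L / 2 * ‖v‖ ^ 2 * t ^ 2) (L * ‖v‖ ^ 2 * t) t := fun t => by
    refine ((hasDerivAt_pow 2 t).const_mul (L / 2 * ‖v‖ ^ 2)).congr_deriv ?_
    push_cast; ring
  have hg'_le : ∀ t ∈ Set.Ico (0 : ℝ) 1,
      ‖⟪gradient f (z + t • v) - gradient f z, v⟫‖ ≤ L * ‖v‖ ^ 2 * t := fun t ht => by
    calc ‖⟪gradient f (z + t • v) - gradient f z, v⟫‖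
        ≤ ‖gradient f (z + t • v) - gradient f z‖ * ‖v‖ := norm_inner_le_norm _ _
      _ ≤ L * ‖z + t • v - z‖ * ‖v‖ := by gcongr; exact hlip _ _
      _ = L * ‖v‖ ^ 2 * t := by
        rw [add_sub_cancel_left, norm_smul, Real.norm_of_nonneg ht.1]; ring
  have := image_norm_le_of_norm_deriv_right_le_deriv_boundary (a := 0) (b := 1)
    (fun t _ => (hg t).continuousAt.continuousWithinAt) (fun t _ => (hg t).hasDerivWithinAt)
    (by simp [g]) hB hg'_le (Set.right_mem_Icc.2 zero_le_one)
  simpa [g] using this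

theorem abs_centralDiff_sub_inner_gradient_le (hf : Differentiable ℝ f)
    (hlip : ∀ x y, ‖gradient f y - gradient f x‖ ≤ L * ‖y - x‖) {α : ℝ} (hα : α ≠ 0) (y w : E) :
    |(f (y + α • w) - f (y - α • w)) / (2 * α) - ⟪w, gradient f y⟫| ≤ L * |α| * ‖w‖ ^ 2 / 2 := by
  have hplus := abs_sub_sub_inner_gradient_le hf hlip y (α • w)
  have hminus := abs_sub_sub_inner_gradient_le hf hlip y (-(α • w))
  rw [← sub_eq_add_neg, norm_neg, inner_neg_left] at hminus
  have hnorm : ‖α • w‖ ^ 2 = |α| ^ 2 * ‖w‖ ^ 2 := by rw [norm_smul, Real.norm_eq_abs, mul_pow]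
  have hdiff : (f (y + α • w) - f (y - α • w)) / (2 * α) - ⟪w, gradient f y⟫
      = ((f (y + α • w) - f y - ⟪α • w, gradient f y⟫)
          - (f (y - α • w) - f y - -⟪α • w, gradient f y⟫)) / (2 * α) := by
    rw [real_inner_smul_left]; field_simp; ring
  rw [hdiff, abs_div, abs_mul, abs_two, div_le_iff₀ (by positivity)]
  calc _ ≤ |f (y + α • w) - f y - ⟪α • w, gradient f y⟫|
        + |f (y - α • w) - f y - -⟪α • w, gradient f y⟫| := abs_sub _ _
    _ ≤ L / 2 * ‖α • w‖ ^ 2 + L / 2 * ‖α • w‖ ^ 2 := add_le_add hplus hminus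
    _ = _ := by rw [hnorm]; ring

end Smoothness

theorem smoothingError_le {L α k β : ℝ} (hL : 0 < L) (hk : 0 ≤ k) (hβ : |β| ≤ L * |α| * k / 2) :
    1 / (4 * L * k) * β ^ 2 / 2 + L * (1 / (4 * L * k)) ^ 2 * β ^ 2 * k ≤ L * α ^ 2 / 16 * k := by
  rcases hk.eq_or_lt with rfl | hk
  · simp
  have hβsq : β ^ 2 ≤ (L * |α| * k / 2) ^ 2 := sq_le_sq' (abs_le.1 hβ).1 (abs_le.1 hβ).2
  have hlhs : 1 / (4 * L * k) * β ^ 2 / 2 + L * (1 / (4 * L * k)) ^ 2 * β ^ 2 * k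
      = 3 * β ^ 2 / (16 * L * k) := by field_simp; ring
  rw [hlhs, div_le_iff₀ (by positivity)]
  calc 3 * β ^ 2 ≤ 3 * (L * |α| * k / 2) ^ 2 := by gcongr
    _ ≤ L * α ^ 2 / 16 * k * (16 * L * k) := by
      rw [div_pow, mul_pow, mul_pow, sq_abs]; nlinarith [mul_nonneg (sq_nonneg α) (sq_nonneg (L * k))]

theorem Real.log_le_sub_inv_div_two {x : ℝ} (hx : 1 ≤ x) : log x ≤ (x - x⁻¹) / 2 := by
  rw [← sinh_log (by positivity)]
  exact self_le_sinh_iff.2 (log_nonneg hx)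

-- For `1 / 2 ≤ l` both sides are junk `0`: the integral diverges and `√` of a negative is `0`.
theorem mgf_sq_gaussianReal (l : ℝ) :
    mgf (fun x => x ^ 2) (gaussianReal 0 1) l = (√(1 - 2 * l))⁻¹ := by
  have hdensity : ∀ x : ℝ, gaussianPDFReal 0 1 x • exp (l * x ^ 2)
      = (√(2 * π))⁻¹ * exp (-(1 / 2 - l) * x ^ 2) := fun x => by
    rw [gaussianPDFReal, smul_eq_mul, mul_assoc, ← exp_add]; push_cast; ring_nf
  rw [mgf, integral_gaussianReal_eq_integral_smul one_ne_zero]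
  simp_rw [hdensity]
  rw [integral_const_mul, integral_gaussian, ← sqrt_inv, ← sqrt_mul (by positivity), ← sqrt_inv]
  congr 1
  field_simp

theorem mgf_sq_of_map_eq_gaussianReal {Ω : Type*} [MeasurableSpace Ω] {P : Measure Ω}
    {X : Ω → ℝ} (hX : P.map X = gaussianReal 0 1) (l : ℝ) :
    mgf (fun ω => X ω ^ 2) P l = (√(1 - 2 * l))⁻¹ := by
  have hXm : AEMeasurable X P := .of_map_ne_zero (by rw [hX]; exact IsProbabilityMeasure.ne_zero _)
  rw [← mgf_sq_gaussianReal l, ← hX, mgf_map hXm (by fun_prop)]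
  rfl

theorem exists_chernoff_exponent_chiSquared {n : ℕ} (hn : 0 < n) {τ : ℝ} (hτ : 0 < τ) :
    ∃ l, 0 ≤ l ∧ l < 1 / 2 ∧
      exp (-l * (n + 2 * √(n * τ) + 2 * τ)) * (√(1 - 2 * l))⁻¹ ^ n ≤ exp (-τ) := by
  -- With `u = √(τ / n)` and `l = u / (1 + 2u)` we get `1 - 2l = (1 + 2u)⁻¹`, and the bound
  -- `log x ≤ (x - x⁻¹) / 2` turns the Chernoff exponent into exactly `-τ`.
  set a := √(n * τ)
  have ha : 0 < a := sqrt_pos.2 (by positivity)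
  have ha2 : a ^ 2 = n * τ := sq_sqrt (by positivity)
  set u := τ / a with hudef
  have hu : 0 < u := by positivity
  set x := 1 + 2 * u with hxdef
  have hx : 0 < x := by positivity
  refine ⟨u / x, by positivity, by rw [div_lt_iff₀ (by positivity)]; linarith, ?_⟩
  have hsqrt : (√(1 - 2 * (u / x)))⁻¹ = √x := by
    have h : 1 - 2 * (u / x) = x⁻¹ := by field_simp; linarith
    rw [h, sqrt_inv, inv_inv]
  have hsqrt_le : √x ≤ exp ((x - x⁻¹) / 4) := by
    rw [← log_le_iff_le_exp (by positivity), log_sqrt (by positivity)]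
    linarith [log_le_sub_inv_div_two (show 1 ≤ x by linarith)]
  calc exp (-(u / x) * (n + 2 * a + 2 * τ)) * (√(1 - 2 * (u / x)))⁻¹ ^ n
      ≤ exp (-(u / x) * (n + 2 * a + 2 * τ)) * exp ((x - x⁻¹) / 4) ^ n := by
        rw [hsqrt]; gcongr
    _ = exp (-(u / x) * (n + 2 * a + 2 * τ) + n * ((x - x⁻¹) / 4)) := by
        rw [← exp_nat_mul, ← exp_add]
    _ ≤ exp (-τ) := by
        gcongr
        rw [← sub_nonneg]
        have key : -τ - (-(u / x) * (n + 2 * a + 2 * τ) + n * ((x - x⁻¹) / 4))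
            = (2 * a * u - n * u ^ 2 - τ) / x := by field_simp; ring
        have hcrit : 2 * a * u - n * u ^ 2 - τ = 0 := by
          rw [hudef]; field_simp; rw [ha2]; ring
        rw [key, hcrit, zero_div]

theorem measureReal_chiSquared_upper_tail_le {ι Ω : Type*} [Fintype ι] [MeasurableSpace Ω]
    {P : Measure Ω} {X : ι → Ω → ℝ} (hindep : iIndepFun X P)
    (hlaw : ∀ i, P.map (X i) = gaussianReal 0 1) {τ : ℝ} (hτ : 0 < τ) :
    P.real {ω | (Fintype.card ι : ℝ) + 2 * √(Fintype.card ι * τ) + 2 * τ ≤ ∑ i, X i ω ^ 2}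
      ≤ exp (-τ) := by
  set n := Fintype.card ι
  rcases n.eq_zero_or_pos with hn | hn
  · have : IsEmpty ι := Fintype.card_eq_zero_iff.1 hn
    have hempty : {ω | (n : ℝ) + 2 * √(n * τ) + 2 * τ ≤ ∑ i, X i ω ^ 2} = ∅ := by
      ext ω; simp [hn, hτ]
    rw [hempty, measureReal_empty]
    positivity
  have : IsProbabilityMeasure P := hindep.isProbabilityMeasure
  obtain ⟨l, hl0, hl, hchernoff⟩ := exists_chernoff_exponent_chiSquared hn hτ
  set Y : ι → Ω → ℝ := fun i ω => X i ω ^ 2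
  have hYindep : iIndepFun Y P := hindep.comp (fun _ y => y ^ 2) fun _ => by fun_prop
  have hYmeas : ∀ i, AEMeasurable (Y i) P := fun i =>
    (AEMeasurable.of_map_ne_zero (by rw [hlaw i]; exact IsProbabilityMeasure.ne_zero _)).pow_const 2
  have hmgf : mgf (∑ i, Y i) P l = (√(1 - 2 * l))⁻¹ ^ n := by
    rw [hYindep.mgf_sum₀ hYmeas, prod_congr rfl fun i _ => mgf_sq_of_map_eq_gaussianReal (hlaw i) l,
      prod_const, card_univ]
  -- A nonzero mgf cannot be the junk value `0` of the integral of a non-integrable function.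
  have hint : Integrable (fun ω => exp (l * (∑ i, Y i) ω)) P := .of_integral_ne_zero <| by
    rw [← mgf, hmgf]
    exact pow_ne_zero _ (inv_ne_zero (sqrt_ne_zero'.2 (by linarith)))
  calc _ = P.real {ω | (n : ℝ) + 2 * √(n * τ) + 2 * τ ≤ (∑ i, Y i) ω} := by
        simp only [Y, Finset.sum_apply]
    _ ≤ _ := measure_ge_le_exp_mul_mgf _ hl0 hint
    _ ≤ exp (-τ) := hmgf ▸ hchernoff

theorem ofReal_one_sub_le_measure_of_measureReal_compl_le {Ω : Type*} [MeasurableSpace Ω]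
    {P : Measure Ω} [IsProbabilityMeasure P] {s : Set Ω} {ε : ℝ} (h : P.real sᶜ ≤ ε) :
    ENNReal.ofReal (1 - ε) ≤ P s := by
  have hcover : 1 ≤ P.real s + P.real sᶜ := by
    simpa [Set.union_compl_self] using measureReal_union_le (μ := P) s sᶜ
  rw [← ofReal_measureReal]
  exact ENNReal.ofReal_le_ofReal (by linarith)

theorem accumulated_smoothing_error_general
    {d : ℕ}
    {Ω : Type*} [MeasurableSpace Ω] (P : Measure Ω) [IsProbabilityMeasure P]
    (f : EuclideanSpace ℝ (Fin d) → ℝ) (L : ℝ) (hL : 0 < L)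
    (hdiff : Differentiable ℝ f)
    (hlip : ∀ x y, ‖gradient f y - gradient f x‖ ≤ L * ‖y - x‖)
    (T : ℕ) (α : ℝ) (hα : 0 < α)
    (δ : ℝ) (hδ : 0 < δ) (hδ1 : δ < 1)
    (u : ℕ → Ω → EuclideanSpace ℝ (Fin d))
    (hu_indep : iIndepFun
      (fun p : Fin T × Fin d => fun ω => u (p.1 : ℕ) ω p.2) P)
    (hu_law : ∀ t, t < T → ∀ i, Measure.map (fun ω => u t ω i) P = gaussianReal 0 1)
    (x : ℕ → Ω → EuclideanSpace ℝ (Fin d))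
    (η : ℕ → Ω → ℝ) (hη : ∀ t ω, η t ω = 1 / (4 * L * ‖u t ω‖ ^ 2))
    (β : ℕ → Ω → ℝ)
    (hβ : ∀ t ω, β t ω = (f (x t ω + α • u t ω) - f (x t ω - α • u t ω)) / (2 * α)
      - ⟪u t ω, gradient f (x t ω)⟫)
    (Δα : ℕ → Ω → ℝ)
    (hΔ : ∀ t ω, Δα t ω = η t ω * β t ω ^ 2 / 2
      + L * η t ω ^ 2 * β t ω ^ 2 * ‖u t ω‖ ^ 2)
    (A : ℝ)
    (hA : A = L * α ^ 2 / 16 *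
      ((d : ℝ) * T + 2 * Real.sqrt ((d : ℝ) * T * Real.log (2 / δ)) + 2 * Real.log (2 / δ))) :
    ENNReal.ofReal (1 - δ / 2) ≤
      P {ω | ∑ t ∈ Finset.range T, Δα t ω ≤ A} := by
  set τ := log (2 / δ)
  have hτ : 0 < τ := log_pos (by rw [lt_div_iff₀ hδ]; linarith)
  have hΔ_le : ∀ t ω, Δα t ω ≤ L * α ^ 2 / 16 * ‖u t ω‖ ^ 2 := fun t ω => by
    rw [hΔ, hη]
    exact smoothingError_le hL (sq_nonneg _)
      (hβ t ω ▸ abs_centralDiff_sub_inner_gradient_le hdiff hlip hα.ne' _ _)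
  have hsum_norm_sq : ∀ ω, ∑ t ∈ range T, ‖u t ω‖ ^ 2 = ∑ p : Fin T × Fin d, u p.1 ω p.2 ^ 2 :=
    fun ω => by
      rw [← Fin.sum_univ_eq_sum_range (fun t => ‖u t ω‖ ^ 2), Fintype.sum_prod_type]
      simp_rw [EuclideanSpace.real_norm_sq_eq]
  have htail := measureReal_chiSquared_upper_tail_le hu_indep
    (fun p => hu_law p.1 p.1.isLt p.2) hτ
  simp only [Fintype.card_prod, Fintype.card_fin, Nat.cast_mul, mul_comm (T : ℝ)] at htail
  have hexp : exp (-τ) = δ / 2 := by rw [exp_neg, exp_log (by positivity), inv_div]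
  have hcompl : {ω | ∑ t ∈ range T, Δα t ω ≤ A}ᶜ ⊆ {ω | (d : ℝ) * T + 2 * √(d * T * τ) + 2 * τ
      ≤ ∑ p : Fin T × Fin d, u p.1 ω p.2 ^ 2} := fun ω (hω : ¬ _) => by
    have hsum : A < L * α ^ 2 / 16 * ∑ t ∈ range T, ‖u t ω‖ ^ 2 :=
      (not_le.1 hω).trans_le <| by rw [mul_sum]; exact sum_le_sum fun t _ => hΔ_le t ω
    rw [hA, hsum_norm_sq] at hsum
    exact (lt_of_mul_lt_mul_left hsum (by positivity)).le
  refine ofReal_one_sub_le_measure_of_measureReal_compl_le ?_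
  calc _ ≤ _ := measureReal_mono hcompl
    _ ≤ exp (-τ) := htail
    _ = δ / 2 := hexp

/-- **Accumulated smoothing error (Lemma `smoothing_event_convex` / stmt 12).**
Along the normalized two-point zeroth-order trajectory, with probability at least `1 − δ/2`
the accumulated finite-difference smoothing errors satisfy `Σ_{t<T} Δ_{α,t} ≤ A_{α,T}(δ)`. -/
theorem accumulated_smoothing_error
    {d : ℕ} (hd : 1 ≤ d)
    {Ω : Type*} [MeasurableSpace Ω] (P : Measure Ω) [IsProbabilityMeasure P]
    (f : EuclideanSpace ℝ (Fin d) → ℝ) (L : ℝ) (hL : 0 < L)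
    (hdiff : Differentiable ℝ f)
    (hlip : ∀ x y, ‖gradient f y - gradient f x‖ ≤ L * ‖y - x‖)
    (T : ℕ) (α : ℝ) (hα : 0 < α)
    (δ : ℝ) (hδ : 0 < δ) (hδ1 : δ < 1)
    (u : ℕ → Ω → EuclideanSpace ℝ (Fin d))
    (hu_meas : ∀ t, Measurable (u t))
    (hu_indep : iIndepFun
      (fun p : Fin T × Fin d => fun ω => u (p.1 : ℕ) ω p.2) P)
    (hu_law : ∀ t, t < T → ∀ i, Measure.map (fun ω => u t ω i) P = gaussianReal 0 1)
    (x₀ : EuclideanSpace ℝ (Fin d))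
    (x : ℕ → Ω → EuclideanSpace ℝ (Fin d)) (hx0 : ∀ ω, x 0 ω = x₀)
    (η : ℕ → Ω → ℝ) (hη : ∀ t ω, η t ω = 1 / (4 * L * ‖u t ω‖ ^ 2))
    (hstep : ∀ t ω, x (t + 1) ω = x t ω - η t ω •
      (((f (x t ω + α • u t ω) - f (x t ω - α • u t ω)) / (2 * α)) • u t ω))
    (β : ℕ → Ω → ℝ)
    (hβ : ∀ t ω, β t ω = (f (x t ω + α • u t ω) - f (x t ω - α • u t ω)) / (2 * α)
      - ⟪u t ω, gradient f (x t ω)⟫)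
    (Δα : ℕ → Ω → ℝ)
    (hΔ : ∀ t ω, Δα t ω = η t ω * β t ω ^ 2 / 2
      + L * η t ω ^ 2 * β t ω ^ 2 * ‖u t ω‖ ^ 2)
    (A : ℝ)
    (hA : A = L * α ^ 2 / 16 *
      ((d : ℝ) * T + 2 * Real.sqrt ((d : ℝ) * T * Real.log (2 / δ)) + 2 * Real.log (2 / δ))) :
    ENNReal.ofReal (1 - δ / 2) ≤
      P {ω | ∑ t ∈ Finset.range T, Δα t ω ≤ A} :=
  accumulated_smoothing_error_general P f L hL hdiff hlip T α hα δ hδ hδ1 u hu_indep hu_law x η hη β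
    hβ Δα hΔ A hA
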